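/- Let Y, Z, W, and H̃ be finite-dimensional real inner product spaces, R : Y → Z a surjective linear map, N ≥ 1 an integer, ℓ : Y → ℝ^{N−1} a linear map, G : W → Y an injective linear map with range(G) = ker(R), G̃ : H̃ → Y an injective linear map, and J : W → H̃ a linear map with G̃ ∘ J = G. Set W₀ := {w ∈ W : ℓ(G w) = 0}. Let a : Y × Y → ℝ be a bilinear form with a(θ,θ) ≥ 0 for all θ ∈ Y and a(G w, G w) ≥ α‖w‖_W² for all w ∈ W₀, for some α > 0. Assume the surjectivity property: for every (r, κ) ∈ Z × ℝ^{N−1} there exists ψ ∈ Y with R ψ = r and ℓ ψ = κ. Then for every linear functional F : H̃ → ℝ there exists a unique tuple (z̃, θ, r, κ, w̃) ∈ H̃ × Y × Z × ℝ^{N−1} × H̃ satisfying: (i) ⟨G̃ z̃, G̃ v⟩_Y = F(v) for all v ∈ H̃; (ii) a(θ, ψ) + ⟨R ψ, r⟩_Z + Σ_{i=1}^{N−1} κᵢ (ℓ ψ)ᵢ = ⟨G̃ z̃, ψ⟩_Y for all ψ ∈ Y, ⟨R θ, s⟩_Z = 0 for all s ∈ Z, and ℓ θ = 0; (iii) ⟨G̃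 w̃, G̃ v⟩_Y = ⟨θ, G̃ v⟩_Y for all v ∈ H̃. Moreover G̃ w̃ = θ and w̃ = J w_X, where w_X is the unique element of W₀ satisfying a(G w_X, G v) = F(J v) for all v ∈ W₀. -/

import Mathlib

/-!
Testing the saddle-point system (ii) against `ψ = G v` with `ℓ (G v) = 0` kills both multiplier
terms, since `R ∘ G = 0`; together with `R θ = 0` and exactness this shows that `θ = G w` for a
solution `w` of the Galerkin problem on `W₀`, which is unique by coercivity. Conversely the
residual `ψ ↦ ⟪G̃ z̃, ψ⟫ - a (G w_X) ψ` vanishes on `ker R ∩ ker ℓ = G W₀`, so by surjectivity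
of `(R, ℓ)` it factors uniquely through `(R, ℓ)`, which produces the unique multipliers `(r, κ)`.
Finally, (i) and (iii) are Gram systems of the injective map `G̃`, hence uniquely solvable, and
`J w_X` solves (iii) because `G̃ (J w_X) = G w_X = θ`.
-/

open scoped RealInnerProductSpace
open Function Module

namespace LinearMap

variable {K E Y V : Type*} [Field K] [AddCommGroup E] [Module K E]
  [AddCommGroup Y] [Module K Y] [AddCommGroup V] [Module K V]

theorem SeparatingLeft.bijective [FiniteDimensional K E] {b : E →ₗ[K] E →ₗ[K] K}
    (hb : b.SeparatingLeft) : Bijective b := by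
  have hinj : Injective b := ker_eq_bot.mp (separatingLeft_iff_ker_eq_bot.mp hb)
  exact ⟨hinj, (injective_iff_surjective_of_finrank_eq_finrank
    Subspace.dual_finrank_eq.symm).mp hinj⟩

theorem SeparatingLeft.existsUnique_forall_apply_eq [FiniteDimensional K E]
    {b : E →ₗ[K] E →ₗ[K] K} (hb : b.SeparatingLeft) (f : Dual K E) :
    ∃! u, ∀ v, b u v = f v := by
  simpa only [LinearMap.ext_iff] using hb.bijective.existsUnique f

theorem existsUnique_mem_forall_mem_apply_eq [FiniteDimensional K E] (P : Submodule K E)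
    {b : E →ₗ[K] E →ₗ[K] K} (hb : ∀ u ∈ P, b u u = 0 → u = 0) (f : Dual K E) :
    ∃! u, u ∈ P ∧ ∀ v ∈ P, b u v = f v := by
  have hsep : (b.compl₁₂ P.subtype P.subtype).SeparatingLeft := fun u hu =>
    Subtype.ext (hb u u.2 (hu u))
  obtain ⟨u, hu, hu_unique⟩ := hsep.existsUnique_forall_apply_eq (f ∘ₗ P.subtype)
  refine ⟨u, ⟨u.2, fun v hv => hu ⟨v, hv⟩⟩, fun w ⟨hw, hw_eq⟩ => ?_⟩
  exact congrArg Subtype.val (hu_unique ⟨w, hw⟩ fun v => hw_eq v v.2)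

theorem existsUnique_lagrangeMultiplier [FiniteDimensional K V] {M : Y →ₗ[K] V}
    (hM : Surjective M) {p : V →ₗ[K] V →ₗ[K] K} (hp : p.SeparatingRight) {g : Dual K Y}
    (hg : ∀ ψ ∈ ker M, g ψ = 0) : ∃! c, ∀ ψ, p (M ψ) c = g ψ := by
  have hp' : Bijective p.flip := (flip_separatingLeft.mpr hp).bijective
  have hΦ : Injective (M.dualMap ∘ₗ p.flip) :=
    (dualMap_injective_of_surjective hM).comp hp'.injective
  obtain ⟨μ, hμ⟩ : g ∈ range M.dualMap := by
    rw [range_dualMap_eq_dualAnnihilator_ker_of_surjective M hM,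
      Submodule.mem_dualAnnihilator]
    exact hg
  obtain ⟨c, rfl⟩ := hp'.surjective μ
  refine ⟨c, fun ψ => congr($hμ ψ), fun c' hc' => hΦ ?_⟩
  ext ψ
  exact (hc' ψ).trans congr($hμ ψ).symm

end LinearMap

theorem existsUnique_inner_map_map_eq {E Y : Type*} [AddCommGroup E] [Module ℝ E]
    [FiniteDimensional ℝ E] [NormedAddCommGroup Y] [InnerProductSpace ℝ Y] {T : E →ₗ[ℝ] Y}
    (hT : Injective T) (f : E →ₗ[ℝ] ℝ) : ∃! u, ∀ v, ⟪T u, T v⟫ = f v := by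
  have hsep : ((innerₗ Y).compl₁₂ T T).SeparatingLeft := fun u hu =>
    (injective_iff_map_eq_zero T).mp hT u (inner_self_eq_zero.mp (hu u))
  exact hsep.existsUnique_forall_apply_eq f

noncomputable def multiplierPairing (Z : Type*) [NormedAddCommGroup Z] [InnerProductSpace ℝ Z]
    (n : ℕ) : (Z × (Fin n → ℝ)) →ₗ[ℝ] (Z × (Fin n → ℝ)) →ₗ[ℝ] ℝ :=
  LinearMap.mk₂ ℝ (fun x y => ⟪x.1, y.1⟫ + y.2 ⬝ᵥ x.2)
    (fun x x' y => by
      simp only [Prod.fst_add, Prod.snd_add, inner_add_left, dotProduct_add]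
      ring)
    (fun c x y => by
      simp only [Prod.smul_fst, Prod.smul_snd, real_inner_smul_left, dotProduct_smul,
        smul_eq_mul]
      ring)
    (fun x y y' => by
      simp only [Prod.fst_add, Prod.snd_add, inner_add_right, add_dotProduct]
      ring)
    (fun c x y => by
      simp only [Prod.smul_fst, Prod.smul_snd, real_inner_smul_right, smul_dotProduct,
        smul_eq_mul]
      ring)

theorem multiplierPairing_separatingRight {Z : Type*} [NormedAddCommGroup Z]
    [InnerProductSpace ℝ Z] {n : ℕ} : (multiplierPairing Z n).SeparatingRight := by
  rintro ⟨r, κ⟩ h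
  have hsum : ⟪r, r⟫ + κ ⬝ᵥ κ = 0 := h (r, κ)
  have hκ : 0 ≤ κ ⬝ᵥ κ := Fintype.sum_nonneg fun i => mul_self_nonneg (κ i)
  obtain ⟨hr, hκ⟩ := (add_eq_zero_iff_of_nonneg real_inner_self_nonneg hκ).mp hsum
  rw [inner_self_eq_zero.mp hr, dotProduct_self_eq_zero.mp hκ, Prod.mk_zero_zero]

section SaddlePoint

variable {Y Z W : Type*} [NormedAddCommGroup Y] [InnerProductSpace ℝ Y]
  [NormedAddCommGroup Z] [InnerProductSpace ℝ Z] {n : ℕ}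

def IsGalerkinSolution [AddCommGroup W] [Module ℝ W] (ℓ : Y →ₗ[ℝ] (Fin n → ℝ))
    (G : W →ₗ[ℝ] Y) (a : Y →ₗ[ℝ] Y →ₗ[ℝ] ℝ) (f : W →ₗ[ℝ] ℝ) (w : W) : Prop :=
  ℓ (G w) = 0 ∧ ∀ v, ℓ (G v) = 0 → a (G w) (G v) = f v

theorem existsUnique_isGalerkinSolution [NormedAddCommGroup W] [NormedSpace ℝ W]
    [FiniteDimensional ℝ W] (ℓ : Y →ₗ[ℝ] (Fin n → ℝ)) (G : W →ₗ[ℝ] Y)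
    {a : Y →ₗ[ℝ] Y →ₗ[ℝ] ℝ} {α : ℝ} (hα : 0 < α)
    (ha : ∀ w : W, ℓ (G w) = 0 → α * ‖w‖ ^ 2 ≤ a (G w) (G w)) (f : W →ₗ[ℝ] ℝ) :
    ∃! w, IsGalerkinSolution ℓ G a f w := by
  refine LinearMap.existsUnique_mem_forall_mem_apply_eq (LinearMap.ker (ℓ ∘ₗ G))
    (b := a.compl₁₂ G G) (fun u hu hu0 => ?_) f
  have hcoer : α * ‖u‖ ^ 2 ≤ 0 := hu0 ▸ ha u hu
  exact norm_eq_zero.mp ((sq_nonpos_iff _).mp (nonpos_of_mul_nonpos_right hcoer hα))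

variable [AddCommGroup W] [Module ℝ W] {R : Y →ₗ[ℝ] Z} {ℓ : Y →ₗ[ℝ] (Fin n → ℝ)}
  {G : W →ₗ[ℝ] Y} {a : Y →ₗ[ℝ] Y →ₗ[ℝ] ℝ} {f : W →ₗ[ℝ] ℝ} {ζ : Y}

theorem exists_isGalerkinSolution_of_saddlePoint (hexact : Exact G R)
    (hζ : ∀ w, ⟪ζ, G w⟫ = f w) {θ : Y} {r : Z} {κ : Fin n → ℝ}
    (hθ : ∀ ψ, a θ ψ + ⟪R ψ, r⟫ + ∑ i, κ i * ℓ ψ i = ⟪ζ, ψ⟫)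
    (hRθ : ∀ s, ⟪R θ, s⟫ = 0) (hℓθ : ℓ θ = 0) :
    ∃ w, G w = θ ∧ IsGalerkinSolution ℓ G a f w := by
  obtain ⟨w, rfl⟩ := (hexact θ).mp (inner_self_eq_zero.mp (hRθ _))
  refine ⟨w, rfl, hℓθ, fun v hv => ?_⟩
  simpa only [hexact.apply_apply_eq_zero, hv, inner_zero_left, Pi.zero_apply, mul_zero,
    Finset.sum_const_zero, add_zero, hζ] using hθ (G v)

theorem existsUnique_saddlePoint_multipliers [FiniteDimensional ℝ Z]
    (hsurj : ∀ (r : Z) (κ : Fin n → ℝ), ∃ ψ : Y, R ψ = r ∧ ℓ ψ = κ) (hexact : Exact G R)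
    (hζ : ∀ w, ⟪ζ, G w⟫ = f w) {w : W} (hw : IsGalerkinSolution ℓ G a f w) :
    ∃! c : Z × (Fin n → ℝ), ∀ ψ, a (G w) ψ + ⟪R ψ, c.1⟫ + ∑ i, c.2 i * ℓ ψ i = ⟪ζ, ψ⟫ := by
  have hM : Surjective (R.prod ℓ) := fun ⟨r, κ⟩ =>
    let ⟨ψ, hr, hκ⟩ := hsurj r κ
    ⟨ψ, Prod.ext hr hκ⟩
  have hg : ∀ ψ ∈ LinearMap.ker (R.prod ℓ), (innerₗ Y ζ - a (G w)) ψ = 0 := by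
    intro ψ hψ
    obtain ⟨hRψ, hℓψ⟩ := Prod.ext_iff.mp hψ
    obtain ⟨v, rfl⟩ := (hexact ψ).mp hRψ
    rw [LinearMap.sub_apply, innerₗ_apply_apply, hζ, hw.2 v hℓψ, sub_self]
  refine (existsUnique_congr fun c => forall_congr' fun ψ => ?_).mp
    (LinearMap.existsUnique_lagrangeMultiplier hM multiplierPairing_separatingRight hg)
  rw [LinearMap.sub_apply, innerₗ_apply_apply, eq_sub_iff_add_eq, add_assoc,
    add_comm (a (G w) ψ)]
  rfl

theorem exists_isGalerkinSolution_of_algorithm {Ht : Type*} [AddCommGroup Ht] [Module ℝ Ht]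
    [FiniteDimensional ℝ Ht] {Gt : Ht →ₗ[ℝ] Y} (hGt : Injective Gt) {J : W →ₗ[ℝ] Ht}
    (hJ : Gt ∘ₗ J = G) (hexact : Exact G R) {F : Ht →ₗ[ℝ] ℝ} {zt wt : Ht} {θ : Y} {r : Z}
    {κ : Fin n → ℝ} (hzt : ∀ v, ⟪Gt zt, Gt v⟫ = F v)
    (hθ : ∀ ψ, a θ ψ + ⟪R ψ, r⟫ + ∑ i, κ i * ℓ ψ i = ⟪Gt zt, ψ⟫)
    (hRθ : ∀ s, ⟪R θ, s⟫ = 0) (hℓθ : ℓ θ = 0) (hwt : ∀ v, ⟪Gt wt, Gt v⟫ = ⟪θ, Gt v⟫) :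
    ∃ w, IsGalerkinSolution ℓ G a (F ∘ₗ J) w ∧ G w = θ ∧ wt = J w := by
  have hGJ : ∀ w, Gt (J w) = G w := LinearMap.congr_fun hJ
  obtain ⟨w, rfl, hw⟩ := exists_isGalerkinSolution_of_saddlePoint (f := F ∘ₗ J) hexact
    (fun w => by rw [← hGJ]; exact hzt (J w)) hθ hRθ hℓθ
  refine ⟨w, hw, rfl, (existsUnique_inner_map_map_eq hGt (innerₗ Y (G w) ∘ₗ Gt)).unique hwt
    fun v => ?_⟩
  rw [hGJ]
  rfl

end SaddlePoint

theorem stmt_5_general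
    {Y Z W Ht : Type*}
    [NormedAddCommGroup Y] [InnerProductSpace ℝ Y] [FiniteDimensional ℝ Y]
    [NormedAddCommGroup Z] [InnerProductSpace ℝ Z] [FiniteDimensional ℝ Z]
    [NormedAddCommGroup W] [InnerProductSpace ℝ W] [FiniteDimensional ℝ W]
    [NormedAddCommGroup Ht] [InnerProductSpace ℝ Ht] [FiniteDimensional ℝ Ht]
    (N : ℕ)
    (R : Y →ₗ[ℝ] Z)
    (ℓ : Y →ₗ[ℝ] (Fin (N - 1) → ℝ))
    (G : W →ₗ[ℝ] Y)
    (hexact : LinearMap.range G = LinearMap.ker R)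
    (Gt : Ht →ₗ[ℝ] Y) (hGt : Function.Injective Gt)
    (J : W →ₗ[ℝ] Ht) (hJ : Gt.comp J = G)
    (a : Y →ₗ[ℝ] Y →ₗ[ℝ] ℝ) (α : ℝ) (hα : 0 < α)
    (ha_coer : ∀ w : W, ℓ (G w) = 0 → α * ‖w‖ ^ 2 ≤ a (G w) (G w))
    (hsurj : ∀ (r : Z) (κ : Fin (N - 1) → ℝ), ∃ ψ : Y, R ψ = r ∧ ℓ ψ = κ)
    (F : Ht →ₗ[ℝ] ℝ) :
    (∃! q : Ht × Y × Z × (Fin (N - 1) → ℝ) × Ht,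
        (∀ v : Ht, ⟪Gt q.1, Gt v⟫ = F v) ∧
        (∀ ψ : Y, a q.2.1 ψ + ⟪R ψ, q.2.2.1⟫ + ∑ i, q.2.2.2.1 i * ℓ ψ i
            = ⟪Gt q.1, ψ⟫) ∧
        (∀ s : Z, ⟪R q.2.1, s⟫ = 0) ∧
        ℓ q.2.1 = 0 ∧
        (∀ v : Ht, ⟪Gt q.2.2.2.2, Gt v⟫ = ⟪q.2.1, Gt v⟫)) ∧
    (∃! wX : W, ℓ (G wX) = 0 ∧
        ∀ v : W, ℓ (G v) = 0 → a (G wX) (G v) = F (J v)) ∧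
    (∀ (zt : Ht) (θ : Y) (r : Z) (κ : Fin (N - 1) → ℝ) (wt : Ht),
      (∀ v : Ht, ⟪Gt zt, Gt v⟫ = F v) →
      (∀ ψ : Y, a θ ψ + ⟪R ψ, r⟫ + ∑ i, κ i * ℓ ψ i = ⟪Gt zt, ψ⟫) →
      (∀ s : Z, ⟪R θ, s⟫ = 0) →
      ℓ θ = 0 →
      (∀ v : Ht, ⟪Gt wt, Gt v⟫ = ⟪θ, Gt v⟫) →
      Gt wt = θ ∧
        ∀ wX : W, ℓ (G wX) = 0 →
          (∀ v : W, ℓ (G v) = 0 → a (G wX) (G v) = F (J v)) → wt = J wX) := by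
  have hex : Exact G R := LinearMap.exact_iff.mpr hexact.symm
  have hGJ : ∀ w, Gt (J w) = G w := LinearMap.congr_fun hJ
  obtain ⟨zt₀, hzt₀, hzt₀_unique⟩ := existsUnique_inner_map_map_eq hGt F
  have hGal := existsUnique_isGalerkinSolution ℓ G hα ha_coer (F ∘ₗ J)
  obtain ⟨w₀, hw₀⟩ := hGal.exists
  obtain ⟨c₀, hc₀, hc₀_unique⟩ := existsUnique_saddlePoint_multipliers hsurj hex
    (fun w => by rw [← hGJ]; exact hzt₀ (J w)) hw₀
  refine ⟨⟨(zt₀, G w₀, c₀.1, c₀.2, J w₀), ⟨hzt₀, hc₀,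
    fun s => by rw [hex.apply_apply_eq_zero, inner_zero_left], hw₀.1, fun v => by rw [hGJ]⟩,
    ?_⟩, hGal, ?_⟩
  · rintro ⟨zt, θ, r, κ, wt⟩ ⟨hzt, hθ, hRθ, hℓθ, hwt⟩
    obtain ⟨w, hw, rfl, rfl⟩ :=
      exists_isGalerkinSolution_of_algorithm hGt hJ hex hzt hθ hRθ hℓθ hwt
    obtain rfl := hzt₀_unique zt hzt
    obtain rfl := hGal.unique hw hw₀
    obtain rfl : (r, κ) = c₀ := hc₀_unique (r, κ) hθ
    rfl
  · intro zt θ r κ wt hzt hθ hRθ hℓθ hwt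
    obtain ⟨w, hw, rfl, rfl⟩ :=
      exists_isGalerkinSolution_of_algorithm hGt hJ hex hzt hθ hRθ hℓθ hwt
    exact ⟨hGJ w, fun wX hwX₁ hwX₂ => congrArg J (hGal.unique hw ⟨hwX₁, hwX₂⟩)⟩

/-- Abstract form of Theorem 4.2 (correctness of Algorithm 4.1 under general
boundary conditions): the pre-processing solve (i), the augmented Stokes-like
system (ii) with Lagrange multipliers `κ`, and the post-processing projection
(iii) have a unique solution, `G̃ w̃ = θ`, and `w̃ = J w_X` where `w_X` is the
unique Galerkin solution in `W₀ = {w : ℓ (G w) = 0}`. -/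
theorem stmt_5
    {Y Z W Ht : Type*}
    [NormedAddCommGroup Y] [InnerProductSpace ℝ Y] [FiniteDimensional ℝ Y]
    [NormedAddCommGroup Z] [InnerProductSpace ℝ Z] [FiniteDimensional ℝ Z]
    [NormedAddCommGroup W] [InnerProductSpace ℝ W] [FiniteDimensional ℝ W]
    [NormedAddCommGroup Ht] [InnerProductSpace ℝ Ht] [FiniteDimensional ℝ Ht]
    (N : ℕ) (hN : 1 ≤ N)
    (R : Y →ₗ[ℝ] Z) (hR : Function.Surjective R)
    (ℓ : Y →ₗ[ℝ] (Fin (N - 1) → ℝ))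
    (G : W →ₗ[ℝ] Y) (hG : Function.Injective G)
    (hexact : LinearMap.range G = LinearMap.ker R)
    (Gt : Ht →ₗ[ℝ] Y) (hGt : Function.Injective Gt)
    (J : W →ₗ[ℝ] Ht) (hJ : Gt.comp J = G)
    (a : Y →ₗ[ℝ] Y →ₗ[ℝ] ℝ) (α : ℝ) (hα : 0 < α)
    (ha_pos : ∀ θ : Y, 0 ≤ a θ θ)
    (ha_coer : ∀ w : W, ℓ (G w) = 0 → α * ‖w‖ ^ 2 ≤ a (G w) (G w))
    (hsurj : ∀ (r : Z) (κ : Fin (N - 1) → ℝ), ∃ ψ : Y, R ψ = r ∧ ℓ ψ = κ)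
    (F : Ht →ₗ[ℝ] ℝ) :
    (∃! q : Ht × Y × Z × (Fin (N - 1) → ℝ) × Ht,
        (∀ v : Ht, ⟪Gt q.1, Gt v⟫ = F v) ∧
        (∀ ψ : Y, a q.2.1 ψ + ⟪R ψ, q.2.2.1⟫ + ∑ i, q.2.2.2.1 i * ℓ ψ i
            = ⟪Gt q.1, ψ⟫) ∧
        (∀ s : Z, ⟪R q.2.1, s⟫ = 0) ∧
        ℓ q.2.1 = 0 ∧
        (∀ v : Ht, ⟪Gt q.2.2.2.2, Gt v⟫ = ⟪q.2.1, Gt v⟫)) ∧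
    (∃! wX : W, ℓ (G wX) = 0 ∧
        ∀ v : W, ℓ (G v) = 0 → a (G wX) (G v) = F (J v)) ∧
    (∀ (zt : Ht) (θ : Y) (r : Z) (κ : Fin (N - 1) → ℝ) (wt : Ht),
      (∀ v : Ht, ⟪Gt zt, Gt v⟫ = F v) →
      (∀ ψ : Y, a θ ψ + ⟪R ψ, r⟫ + ∑ i, κ i * ℓ ψ i = ⟪Gt zt, ψ⟫) →
      (∀ s : Z, ⟪R θ, s⟫ = 0) →
      ℓ θ = 0 →
      (∀ v : Ht, ⟪Gt wt, Gt v⟫ = ⟪θ, Gt v⟫) →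
      Gt wt = θ ∧
        ∀ wX : W, ℓ (G wX) = 0 →
          (∀ v : W, ℓ (G v) = 0 → a (G wX) (G v) = F (J v)) → wt = J wX) :=
  stmt_5_general N R ℓ G hexact Gt hGt J hJ a α hα ha_coer hsurj F
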